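/- arXiv:1010.3299 — 6 statements merged into one kernel-verified Lean document; each statement's English description precedes it below -/
import Mathlib

section
/- Let D be a connected graph with graph distance d, let J ⊆ D, and let f : J → ℤ. There exists an extension F : D → ℤ with F = f on J and |F(x) − F(y)| ≤ 1 for all adjacent x, y in D if and only if for all x, y ∈ J, d(x,y) ≥ |f(x) − f(y)|. -/
/-- Chen's theorem (Theorem 2.1): a gradually varied extension of `f : J → ℤ`
exists iff `d(x,y) ≥ |f x - f y|` for all `x, y ∈ J`. -/
theorem gradually_varied_extension_iff {V : Type*} (G : SimpleGraph V)
    (hG : G.Connected) (J : Set V) (f : J → ℤ) :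
    (∃ F : V → ℤ, (∀ x : J, F x = f x) ∧
      ∀ x y : V, G.Adj x y → |F x - F y| ≤ 1) ↔
    (∀ x y : J, |f x - f y| ≤ (G.dist (x : V) (y : V) : ℤ)) := by
  constructor
  · rintro ⟨F, hFJ, hadj⟩ x y
    have key : ∀ (u v : V) (p : G.Walk u v), |F u - F v| ≤ (p.length : ℤ) := by
      intro u v p
      induction p with
      | nil => simp
      | @cons a b c h q ih =>
        calc |F a - F c| ≤ |F a - F b| + |F b - F c| := abs_sub_le _ _ _
          _ ≤ 1 + (q.length : ℤ) := add_le_add (hadj a b h) ih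
          _ = ((SimpleGraph.Walk.cons h q).length : ℤ) := by
              simp [SimpleGraph.Walk.length_cons]; ring
    obtain ⟨p, hp⟩ := hG.exists_walk_length_eq_dist (x : V) (y : V)
    rw [← hFJ x, ← hFJ y, ← hp]
    exact key _ _ p
  · intro h
    rcases isEmpty_or_nonempty J with hJ | hJ
    · exact ⟨fun _ => 0, fun x => (hJ.false x).elim, fun x y _ => by simp⟩
    · obtain ⟨x0⟩ := hJ
      set F : V → ℤ := fun v => sInf (Set.range fun x : J => f x + (G.dist (x : V) v : ℤ))
        with hF
      have hbdd : ∀ v : V, BddBelow (Set.range fun x : J => f x + (G.dist (x : V) v : ℤ)) := by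
        intro v
        refine ⟨f x0 - (G.dist (x0 : V) v : ℤ), ?_⟩
        rintro _ ⟨x, rfl⟩
        simp only []
        have h1 : |f x0 - f x| ≤ (G.dist (x0 : V) (x : V) : ℤ) := h x0 x
        have h2 : G.dist (x0 : V) (x : V) ≤ G.dist (x0 : V) v + G.dist v (x : V) :=
          hG.dist_triangle
        have h3 : f x0 - (G.dist (x0 : V) (x : V) : ℤ) ≤ f x := by
          have := abs_le.mp h1
          linarith [this.1, this.2]
        have h5 : G.dist v (x : V) = G.dist (x : V) v := SimpleGraph.dist_comm
        have h4 : (G.dist (x0 : V) (x : V) : ℤ) ≤ (G.dist (x0 : V) v : ℤ) + (G.dist (x : V) v : ℤ) := by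
          rw [h5] at h2; exact_mod_cast h2
        linarith
      have hne : ∀ v : V, (Set.range fun x : J => f x + (G.dist (x : V) v : ℤ)).Nonempty :=
        fun v => ⟨_, ⟨x0, rfl⟩⟩
      have hle : ∀ (v : V) (x : J), F v ≤ f x + (G.dist (x : V) v : ℤ) :=
        fun v x => csInf_le (hbdd v) ⟨x, rfl⟩
      have hge : ∀ (v : V) (c : ℤ), (∀ x : J, c ≤ f x + (G.dist (x : V) v : ℤ)) → c ≤ F v := by
        intro v c hc
        refine le_csInf (hne v) ?_
        rintro _ ⟨x, rfl⟩
        exact hc x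
      refine ⟨F, ?_, ?_⟩
      · intro x
        refine le_antisymm ?_ ?_
        · have := hle (x : V) x
          simpa [SimpleGraph.dist_self] using this
        · refine hge (x : V) (f x) ?_
          intro y
          have h1 := abs_le.mp (h x y)
          have h2 : G.dist (x : V) (y : V) = G.dist (y : V) (x : V) := SimpleGraph.dist_comm
          have : |f x - f y| ≤ (G.dist (y : V) (x : V) : ℤ) := by
            rw [← h2]; exact h x y
          have := abs_le.mp this
          linarith [this.1, this.2]
      · intro u v huv
        have hduv : G.dist u v ≤ 1 := by
          simpa using SimpleGraph.dist_le (SimpleGraph.Walk.cons huv SimpleGraph.Walk.nil)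
        have hdvu : G.dist v u ≤ 1 := by
          simpa using SimpleGraph.dist_le (SimpleGraph.Walk.cons huv.symm SimpleGraph.Walk.nil)
        have key : ∀ (a b : V), G.Adj a b → F b - 1 ≤ F a := by
          intro a b hab
          refine hge a (F b - 1) ?_
          intro x
          have h1 : F b ≤ f x + (G.dist (x : V) b : ℤ) := hle b x
          have h2 : G.dist (x : V) b ≤ G.dist (x : V) a + G.dist a b := hG.dist_triangle
          have h3 : G.dist a b ≤ 1 := by
            simpa using SimpleGraph.dist_le (SimpleGraph.Walk.cons hab SimpleGraph.Walk.nil)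
          have h4 : (G.dist (x : V) b : ℤ) ≤ (G.dist (x : V) a : ℤ) + 1 := by
            exact_mod_cast h2.trans (by omega)
          linarith
        have h1 : F v - 1 ≤ F u := key u v huv
        have h2 : F u - 1 ≤ F v := key v u huv.symm
        rw [abs_le]
        constructor <;> linarith
end

section
/- Let D be a connected graph with graph distance d, J ⊆ D, and f : J → ℤ satisfying d(x,y) ≥ |f(x) − f(y)| for all x, y ∈ J. Then F(x) = min_{y∈J} (f(y) + d(x,y)) is a gradually varied extension of f: F agrees with f on J and |F(a) − F(b)| ≤ 1 for all adjacent a, b. -/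
/-- The discrete McShane minimal extension `F x = min_{y ∈ J} (f y + d x y)`
is a gradually varied extension of `f` when `f` satisfies Chen's condition. -/
theorem discrete_mcshane_min_extension {V : Type*} [Fintype V]
    (G : SimpleGraph V) (hG : G.Connected) (J : Finset V) (hJ : J.Nonempty)
    (f : V → ℤ)
    (hf : ∀ x ∈ J, ∀ y ∈ J, |f x - f y| ≤ (G.dist x y : ℤ))
    (F : V → ℤ)
    (hF : ∀ x : V, F x = J.inf' hJ (fun y => f y + (G.dist x y : ℤ))) :
    (∀ x ∈ J, F x = f x) ∧
    (∀ a b : V, G.Adj a b → |F a - F b| ≤ 1) := by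
  have key : ∀ a b : V, G.Adj a b → F a ≤ F b + 1 := by
    intro a b hab
    rw [hF a, hF b]
    obtain ⟨y, hy, hval⟩ := J.exists_mem_eq_inf' hJ (fun y => f y + (G.dist b y : ℤ))
    rw [hval]
    refine le_trans (Finset.inf'_le _ hy) ?_
    have htri : G.dist a y ≤ G.dist a b + G.dist b y := hG.dist_triangle
    have hd1 : G.dist a b = 1 := (SimpleGraph.dist_eq_one_iff_adj).mpr hab
    have : (G.dist a y : ℤ) ≤ (G.dist b y : ℤ) + 1 := by
      rw [hd1] at htri; exact_mod_cast by omega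
    omega
  constructor
  · intro x hx
    rw [hF x]
    apply le_antisymm
    · refine le_trans (Finset.inf'_le _ hx) ?_
      simp [SimpleGraph.dist_self]
    · rw [Finset.le_inf'_iff]
      intro y hy
      have := hf x hx y hy
      rw [abs_le] at this
      omega
  · intro a b hab
    have h1 := key a b hab
    have h2 := key b a hab.symm
    rw [abs_le]; omega
end

section
/- Let D be a connected graph with graph distance d and J ⊆ D. A function f : J → ℤ admits a gradually varied extension to D if and only if f is 1-Lipschitz from (J, d|_J) to ℤ with the usual metric, i.e., |f(x) − f(y)| ≤ d(x,y) for all x, y ∈ J. -/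
private lemma walk_bound {V : Type*} {G : SimpleGraph V} (F : V → ℤ)
    (hF : ∀ a b : V, G.Adj a b → |F a - F b| ≤ 1) :
    ∀ {u v : V} (p : G.Walk u v), |F u - F v| ≤ p.length := by
  intro u v p
  induction p with
  | nil => simp
  | cons h q ih =>
    rename_i a b c
    calc |F a - F c| ≤ |F a - F b| + |F b - F c| := abs_sub_le _ _ _
      _ ≤ 1 + q.length := add_le_add (hF _ _ h) ih
      _ = ((q.length + 1 : ℕ) : ℤ) := by push_cast; ring
    
/-- Chen's theorem restated: `f : J → ℤ` admits a gradually varied extension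
to the whole connected graph iff `f` is 1-Lipschitz for the graph distance. -/
theorem gradually_varied_extendable_iff_lipschitz {V : Type*}
    (G : SimpleGraph V) (hG : G.Connected) (J : Set V) (f : J → ℤ) :
    (∃ F : V → ℤ, (∀ x : J, F x = f x) ∧
      ∀ a b : V, G.Adj a b → |F a - F b| ≤ 1) ↔
    (∀ x y : J, |f x - f y| ≤ (G.dist (x : V) (y : V) : ℤ)) := by
  constructor
  · rintro ⟨F, hFJ, hF⟩ x y
    obtain ⟨p, hp⟩ := hG.exists_walk_length_eq_dist (x : V) (y : V)
    rw [← hFJ x, ← hFJ y, ← hp]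
    exact walk_bound F hF p
  · intro hf
    rcases isEmpty_or_nonempty J with hJ | hJ
    · exact ⟨fun _ => 0, fun x => (hJ.elim x), fun a b _ => by simp⟩
    · set F : V → ℤ := fun v => ⨅ x : J, (f x + (G.dist (x : V) v : ℤ)) with hFdef
      have bdd : ∀ v : V, BddBelow (Set.range fun x : J => f x + (G.dist (x : V) v : ℤ)) := by
        intro v
        obtain ⟨x₀⟩ := hJ
        refine ⟨f x₀ - (G.dist (x₀ : V) v : ℤ), ?_⟩
        rintro _ ⟨x, rfl⟩
        have h1 : |f x₀ - f x| ≤ (G.dist (x₀ : V) (x : V) : ℤ) := hf x₀ x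
        have h2 : G.dist (x₀ : V) (x : V) ≤ G.dist (x₀ : V) v + G.dist v (x : V) :=
          hG.dist_triangle
        have h3 : G.dist v (x : V) = G.dist (x : V) v := SimpleGraph.dist_comm
        have := abs_le.mp h1
        push_cast at h2 ⊢
        omega
      have key : ∀ v : V, ∀ x : J, F v ≤ f x + (G.dist (x : V) v : ℤ) := by
        intro v x
        exact ciInf_le (bdd v) x
      have key2 : ∀ v : V, ∀ c : ℤ, (∀ x : J, c ≤ f x + (G.dist (x : V) v : ℤ)) → c ≤ F v :=
        fun v c h => le_ciInf h
      refine ⟨F, ?_, ?_⟩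
      · intro x
        apply le_antisymm
        · have := key (x : V) x
          simpa [SimpleGraph.dist_self] using this
        · apply key2
          intro y
          have := (abs_le.mp (hf x y)).1
          have hc : G.dist (y : V) (x : V) = G.dist (x : V) (y : V) := SimpleGraph.dist_comm
          have := (abs_le.mp (hf x y))
          omega
      · intro a b hab
        have hd : ∀ x : J, (G.dist (x : V) a : ℤ) ≤ G.dist (x : V) b + 1 ∧
            (G.dist (x : V) b : ℤ) ≤ G.dist (x : V) a + 1 := by
          intro x
          constructor
          · have h1 : G.dist (x : V) a ≤ G.dist (x : V) b + G.dist b a := hG.dist_triangle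
            have h2 : G.dist b a = 1 := SimpleGraph.dist_eq_one_iff_adj.mpr hab.symm
            push_cast at h1; omega
          · have h1 : G.dist (x : V) b ≤ G.dist (x : V) a + G.dist a b := hG.dist_triangle
            have h2 : G.dist a b = 1 := SimpleGraph.dist_eq_one_iff_adj.mpr hab
            push_cast at h1; omega
        have hab1 : F a - 1 ≤ F b := by
          apply key2
          intro x
          have h1 := key a x
          have h2 := (hd x).1
          omega
        have hab2 : F b - 1 ≤ F a := by
          apply key2
          intro x
          have h1 := key b x
          have h2 := (hd x).2
          omega
        rw [abs_le]
        omega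
end

section
/- Let D be a connected graph, J ⊆ D, and f : J → ℤ satisfy the gradually varied extension condition d(x,y) ≥ |f(x) − f(y)| for all x, y ∈ J. Then the pointwise functions F_min(x) = max_{y∈J}(f(y) − d(x,y)) and F_max(x) = min_{y∈J}(f(y) + d(x,y)) are both gradually varied extensions of f, and every gradually varied extension G of f satisfies F_min ≤ G ≤ F_max pointwise. -/
/-!
A gradually varied function changes by at most one along each edge, hence by at most the length
of any walk, so it is 1-Lipschitz for the graph distance. Consequently every gradually varied
extension `g` of `f` satisfies `f y - d(x, y) ≤ g x ≤ f y + d(x, y)` for all `y ∈ J`, which is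
the two-sided bound. Conversely `F_min` is a maximum of the gradually varied functions
`x ↦ f y - d(x, y)`, hence gradually varied, and it agrees with `f` on `J` exactly because of the
extension condition; `F_max` is handled by the symmetry `F_max f = -F_min (-f)`.
-/

namespace Finset

theorem inf'_eq_neg_sup'_neg {ι α : Type*} [AddCommGroup α] [LinearOrder α]
    [IsOrderedAddMonoid α] {s : Finset ι} (hs : s.Nonempty) (φ : ι → α) :
    s.inf' hs φ = -s.sup' hs fun i => -φ i := by
  apply le_antisymm
  · exact le_neg.mpr <| sup'_le _ _ fun i hi => neg_le_neg (inf'_le φ hi)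
  · exact le_inf' _ _ fun i hi => neg_le.mp (le_sup' (fun i => -φ i) hi)

end Finset

namespace SimpleGraph

variable {V : Type*} {G : SimpleGraph V}

def IsGraduallyVaried (G : SimpleGraph V) (g : V → ℤ) : Prop :=
  ∀ a b, G.Adj a b → |g a - g b| ≤ 1

theorem IsGraduallyVaried.neg {g : V → ℤ} (hg : G.IsGraduallyVaried g) :
    G.IsGraduallyVaried (-g) := fun a b hab => by
  simpa only [Pi.neg_apply, neg_sub_neg, abs_sub_comm] using hg a b hab

theorem IsGraduallyVaried.abs_sub_le_length {g : V → ℤ} (hg : G.IsGraduallyVaried g) :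
    ∀ {x y : V} (p : G.Walk x y), |g x - g y| ≤ p.length
  | _, _, .nil => by simp
  | x, y, .cons (v := v) hxv p => calc
      |g x - g y| ≤ |g x - g v| + |g v - g y| := abs_sub_le _ _ _
      _ ≤ 1 + p.length := add_le_add (hg x v hxv) (hg.abs_sub_le_length p)
      _ = (p.cons hxv).length := by rw [Walk.length_cons]; push_cast; ring

theorem IsGraduallyVaried.abs_sub_le_dist {g : V → ℤ} (hg : G.IsGraduallyVaried g)
    (hG : G.Connected) (x y : V) : |g x - g y| ≤ G.dist x y := by
  obtain ⟨p, hp⟩ := hG.exists_walk_length_eq_dist x y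
  exact hp ▸ hg.abs_sub_le_length p

theorem isGraduallyVaried_dist_left (y : V) :
    G.IsGraduallyVaried fun x => (G.dist x y : ℤ) := fun a b hab => by
  dsimp only
  rw [dist_comm (u := a), dist_comm (u := b), abs_le]
  rcases hab.diff_dist_adj (u := y) with h | h | h <;> omega

theorem IsGraduallyVaried.finset_sup' {ι : Type*} {s : Finset ι} (hs : s.Nonempty)
    {φ : ι → V → ℤ} (hφ : ∀ i ∈ s, G.IsGraduallyVaried (φ i)) :
    G.IsGraduallyVaried fun x => s.sup' hs (φ · x) := by
  have step : ∀ a b, G.Adj a b → s.sup' hs (φ · a) ≤ s.sup' hs (φ · b) + 1 :=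
    fun a b hab => Finset.sup'_le _ _ fun i hi => by
      have hi₁ := (abs_sub_le_iff.mp (hφ i hi a b hab)).1
      have hi₂ := Finset.le_sup' (φ · b) hi
      linarith
  intro a b hab
  rw [abs_sub_le_iff]
  exact ⟨by linarith [step a b hab], by linarith [step b a hab.symm]⟩

variable (G) in
noncomputable def minExtension (J : Finset V) (hJ : J.Nonempty) (f : V → ℤ) (x : V) : ℤ :=
  J.sup' hJ fun y => f y - G.dist x y

variable (G) in
noncomputable def maxExtension (J : Finset V) (hJ : J.Nonempty) (f : V → ℤ) (x : V) : ℤ :=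
  J.inf' hJ fun y => f y + G.dist x y

variable {J : Finset V} {hJ : J.Nonempty} {f : V → ℤ}

theorem minExtension_eq_of_mem (hf : ∀ x ∈ J, ∀ y ∈ J, |f x - f y| ≤ G.dist x y) {x : V}
    (hx : x ∈ J) : G.minExtension J hJ f x = f x := by
  unfold minExtension
  apply le_antisymm
  · refine Finset.sup'_le _ _ fun y hy => ?_
    have hyx := (abs_le.mp (hf y hy x hx)).2
    rw [dist_comm] at hyx
    linarith
  · exact Finset.le_sup'_of_le _ hx (by simp)

theorem isGraduallyVaried_minExtension : G.IsGraduallyVaried (G.minExtension J hJ f) :=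
  IsGraduallyVaried.finset_sup' hJ fun y _ a b hab => by
    simpa only [sub_sub_sub_cancel_left, abs_sub_comm] using isGraduallyVaried_dist_left y a b hab

theorem minExtension_le (hG : G.Connected) {g : V → ℤ} (hg : G.IsGraduallyVaried g)
    (hgf : ∀ y ∈ J, g y = f y) (x : V) : G.minExtension J hJ f x ≤ g x :=
  Finset.sup'_le _ _ fun y hy => by
    have hyx := (abs_le.mp (hg.abs_sub_le_dist hG y x)).2
    rw [hgf y hy, dist_comm] at hyx
    linarith

theorem maxExtension_eq_neg_minExtension_neg :
    G.maxExtension J hJ f = -G.minExtension J hJ (-f) := by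
  ext x
  simp only [maxExtension, minExtension, Finset.inf'_eq_neg_sup'_neg, Pi.neg_apply, neg_add,
    sub_eq_add_neg]

theorem maxExtension_eq_of_mem (hf : ∀ x ∈ J, ∀ y ∈ J, |f x - f y| ≤ G.dist x y) {x : V}
    (hx : x ∈ J) : G.maxExtension J hJ f x = f x := by
  have hf' : ∀ x ∈ J, ∀ y ∈ J, |(-f) x - (-f) y| ≤ G.dist x y := fun x hx y hy => by
    simpa only [Pi.neg_apply, neg_sub_neg, abs_sub_comm] using hf x hx y hy
  rw [maxExtension_eq_neg_minExtension_neg, Pi.neg_apply, minExtension_eq_of_mem hf' hx,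
    Pi.neg_apply, neg_neg]

theorem isGraduallyVaried_maxExtension : G.IsGraduallyVaried (G.maxExtension J hJ f) :=
  maxExtension_eq_neg_minExtension_neg (G := G) ▸ isGraduallyVaried_minExtension.neg

theorem le_maxExtension (hG : G.Connected) {g : V → ℤ} (hg : G.IsGraduallyVaried g)
    (hgf : ∀ y ∈ J, g y = f y) (x : V) : g x ≤ G.maxExtension J hJ f x := by
  have := minExtension_le (hJ := hJ) hG hg.neg (fun y hy => congrArg Neg.neg (hgf y hy)) x
  rw [maxExtension_eq_neg_minExtension_neg, Pi.neg_apply]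
  exact le_neg.mpr this

end SimpleGraph

theorem discrete_mcshane_whitney_extremal_general {V : Type*}
    (G : SimpleGraph V) (hG : G.Connected) (J : Finset V) (hJ : J.Nonempty)
    (f : V → ℤ)
    (hf : ∀ x ∈ J, ∀ y ∈ J, |f x - f y| ≤ (G.dist x y : ℤ))
    (Fmin Fmax : V → ℤ)
    (hFmin : ∀ x : V, Fmin x = J.sup' hJ (fun y => f y - (G.dist x y : ℤ)))
    (hFmax : ∀ x : V, Fmax x = J.inf' hJ (fun y => f y + (G.dist x y : ℤ))) :
    ((∀ x ∈ J, Fmin x = f x) ∧ ∀ a b : V, G.Adj a b → |Fmin a - Fmin b| ≤ 1) ∧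
    ((∀ x ∈ J, Fmax x = f x) ∧ ∀ a b : V, G.Adj a b → |Fmax a - Fmax b| ≤ 1) ∧
    (∀ G' : V → ℤ, (∀ x ∈ J, G' x = f x) →
      (∀ a b : V, G.Adj a b → |G' a - G' b| ≤ 1) →
      ∀ x : V, Fmin x ≤ G' x ∧ G' x ≤ Fmax x) := by
  obtain rfl : Fmin = G.minExtension J hJ f := funext hFmin
  obtain rfl : Fmax = G.maxExtension J hJ f := funext hFmax
  refine ⟨⟨fun _ => SimpleGraph.minExtension_eq_of_mem hf, ?_⟩,
    ⟨fun _ => SimpleGraph.maxExtension_eq_of_mem hf, ?_⟩, fun g hgf hg x => ⟨?_, ?_⟩⟩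
  · exact SimpleGraph.isGraduallyVaried_minExtension
  · exact SimpleGraph.isGraduallyVaried_maxExtension
  · exact SimpleGraph.minExtension_le hG hg hgf x
  · exact SimpleGraph.le_maxExtension hG hg hgf x

/-- The discrete McShane-Whitney extensions
`F_min x = max_{y∈J}(f y − d x y)` and `F_max x = min_{y∈J}(f y + d x y)`
are gradually varied extensions of `f`, and every gradually varied extension
lies between them. -/
theorem discrete_mcshane_whitney_extremal {V : Type*} [Fintype V]
    (G : SimpleGraph V) (hG : G.Connected) (J : Finset V) (hJ : J.Nonempty)
    (f : V → ℤ)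
    (hf : ∀ x ∈ J, ∀ y ∈ J, |f x - f y| ≤ (G.dist x y : ℤ))
    (Fmin Fmax : V → ℤ)
    (hFmin : ∀ x : V, Fmin x = J.sup' hJ (fun y => f y - (G.dist x y : ℤ)))
    (hFmax : ∀ x : V, Fmax x = J.inf' hJ (fun y => f y + (G.dist x y : ℤ))) :
    ((∀ x ∈ J, Fmin x = f x) ∧ ∀ a b : V, G.Adj a b → |Fmin a - Fmin b| ≤ 1) ∧
    ((∀ x ∈ J, Fmax x = f x) ∧ ∀ a b : V, G.Adj a b → |Fmax a - Fmax b| ≤ 1) ∧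
    (∀ G' : V → ℤ, (∀ x ∈ J, G' x = f x) →
      (∀ a b : V, G.Adj a b → |G' a - G' b| ≤ 1) →
      ∀ x : V, Fmin x ≤ G' x ∧ G' x ≤ Fmax x) :=
  discrete_mcshane_whitney_extremal_general G hG J hJ f hf Fmin Fmax hFmin hFmax
end

section
/- Let D be a connected graph and suppose F, G : D → ℤ are gradually varied extensions of the same f : J → ℤ (J ⊆ D). Then any function H : D → ℤ with F(v) ≤ H(v) ≤ G(v) for all v need not be gradually varied; however, the function H(v) = ⌊(F(v) + G(v))/2⌋ satisfies |H(a) − H(b)| ≤ 1 for all adjacent a, b, i.e., H is gradually varied. -/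
/-- The floor-midpoint `H v = ⌊(F v + G v)/2⌋` of two gradually varied
extensions of the same `f` is again a gradually varied extension of `f`. -/
theorem floor_mid_gradually_varied {V : Type*} (Γ : SimpleGraph V)
    (hΓ : Γ.Connected) (J : Set V) (f : J → ℤ) (F G : V → ℤ)
    (hFJ : ∀ x : J, F x = f x) (hGJ : ∀ x : J, G x = f x)
    (hF : ∀ a b : V, Γ.Adj a b → |F a - F b| ≤ 1)
    (hG : ∀ a b : V, Γ.Adj a b → |G a - G b| ≤ 1)
    (H : V → ℤ) (hH : ∀ v : V, H v = (F v + G v).fdiv 2) :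
    (∀ x : J, H x = f x) ∧
    (∀ a b : V, Γ.Adj a b → |H a - H b| ≤ 1) := by
  constructor
  · intro x
    have := hH x
    rw [hFJ x, hGJ x] at this
    rw [this, Int.fdiv_eq_ediv_of_nonneg _ (by norm_num)]
    omega
  · intro a b hab
    have h1 := hF a b hab
    have h2 := hG a b hab
    rw [hH a, hH b, Int.fdiv_eq_ediv_of_nonneg _ (by norm_num), Int.fdiv_eq_ediv_of_nonneg _ (by norm_num)]
    rw [abs_le] at *
    omega
end

section
/- Let D be a finite connected graph, J ⊆ D, and f : J → ℤ satisfy d(x,y) ≥ |f(x) − f(y)| for all x, y ∈ J. If v ∉ J, then setting J' = J ∪ {v} and extending f by f(v) = min_{y∈J}(f(y) + d(v,y)) yields a function on J' that still satisfies the gradually varied extension condition d(x,y) ≥ |f(x) − f(y)| for all x, y ∈ J'. -/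
/-- Single-point extension step in the constructive proof of Chen's theorem:
extending `f` to a new vertex `v` by `f v = min_{y∈J}(f y + d v y)` preserves
the gradually varied extension condition. -/
theorem single_point_extension_step {V : Type*} [Fintype V] [DecidableEq V]
    (G : SimpleGraph V) (hG : G.Connected) (J : Finset V) (hJ : J.Nonempty)
    (f : V → ℤ)
    (hf : ∀ x ∈ J, ∀ y ∈ J, |f x - f y| ≤ (G.dist x y : ℤ))
    (v : V) (hv : v ∉ J) (f' : V → ℤ)
    (hf' : ∀ x : V, f' x =
      if x = v then J.inf' hJ (fun y => f y + (G.dist v y : ℤ)) else f x) :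
    ∀ x ∈ insert v J, ∀ y ∈ insert v J, |f' x - f' y| ≤ (G.dist x y : ℤ) := by
  have hfv : f' v = J.inf' hJ (fun y => f y + (G.dist v y : ℤ)) := by
    rw [hf' v]; simp
  have hfx : ∀ x ∈ J, f' x = f x := by
    intro x hx
    rw [hf' x, if_neg]
    rintro rfl; exact hv hx
  -- key: for x ∈ J, |f' v - f x| ≤ d(v,x)
  have key : ∀ x ∈ J, |f' v - f x| ≤ (G.dist v x : ℤ) := by
    intro x hx
    rw [abs_le]
    constructor
    · -- f x - d(v,x) ≤ f' v : via minimizer y0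
      obtain ⟨y0, hy0, hmin⟩ := J.exists_mem_eq_inf' hJ (fun y => f y + (G.dist v y : ℤ))
      rw [hfv, hmin]
      have h1 : |f x - f y0| ≤ (G.dist x y0 : ℤ) := hf x hx y0 hy0
      have h2 : G.dist x y0 ≤ G.dist x v + G.dist v y0 := hG.dist_triangle
      have h3 : f x - f y0 ≤ (G.dist x v : ℤ) + (G.dist v y0 : ℤ) := by
        calc f x - f y0 ≤ |f x - f y0| := le_abs_self _
          _ ≤ (G.dist x y0 : ℤ) := h1
          _ ≤ (G.dist x v : ℤ) + (G.dist v y0 : ℤ) := by exact_mod_cast h2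
      have hcomm : G.dist x v = G.dist v x := G.dist_comm
      linarith
    · -- f' v ≤ f x + d(v,x)
      rw [hfv]
      have := Finset.inf'_le (fun y => f y + (G.dist v y : ℤ)) hx
      linarith
  intro x hx y hy
  rw [Finset.mem_insert] at hx hy
  rcases hx with rfl | hx
  · rcases hy with rfl | hy
    · simp
    · rw [hfx y hy]; exact key y hy
  · rcases hy with rfl | hy
    · rw [hfx x hx, abs_sub_comm, G.dist_comm]; exact key x hx
    · rw [hfx x hx, hfx y hy]; exact hf x hx y hy
end
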